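/- Let s_1 and s_2 be coprime nonzero integers and let Γ_{s_1,s_2} = {(θ_1, θ_2) ∈ T^2 : s_1θ_1 + s_2θ_2 = 0 in ℝ/ℤ}. Then Γ_{s_1,s_2} ∩ Π_3 = ∅ if and only if s_1 s_2 > 0 and |s_1| + |s_2| ≤ 3, i.e., if and only if the slope s = −s_1/s_2 belongs to {−1, −2, −1/2}. -/

import Mathlib

/-! A point `q(x, y)` with `x, y ∈ (0, 1/r)` lies on `Γ_{s₁,s₂}` iff `s₁x + s₂y ∈ ℤ`. Negating
`(s₁, s₂)` changes nothing, so let `s₁ > 0`. If `s₂ < 0`, the value `0` is attained. If `s₂ > 0`,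
the values fill `(0, (s₁ + s₂)/r)`, which contains an integer exactly when `s₁ + s₂ > r`. -/

noncomputable section

/-- The two-dimensional torus `T² = (ℝ/ℤ)²`. -/
abbrev T2 := AddCircle (1 : ℝ) × AddCircle (1 : ℝ)

/-- The subgroup `Γ_{s₁,s₂} = {(θ₁, θ₂) ∈ T² : s₁θ₁ + s₂θ₂ = 0}`. -/
def GammaSlope (s1 s2 : ℤ) : Set T2 := {θ : T2 | s1 • θ.1 + s2 • θ.2 = 0}

/-- `Π_r ⊂ T²`, the image under `q` of the open square `(0, 1/r)²`. -/
def PiSquare (r : ℕ) : Set T2 :=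
  {θ : T2 | ∃ x y : ℝ, 0 < x ∧ x < 1 / (r : ℝ) ∧ 0 < y ∧ y < 1 / (r : ℝ) ∧
    θ = ((x : AddCircle (1 : ℝ)), (y : AddCircle (1 : ℝ)))}

open Set

lemma mk_mem_gammaSlope_iff {s1 s2 : ℤ} {x y : ℝ} :
    ((x : AddCircle (1 : ℝ)), (y : AddCircle (1 : ℝ))) ∈ GammaSlope s1 s2 ↔
      ∃ n : ℤ, s1 * x + s2 * y = n := by
  rw [GammaSlope, mem_ofPred_eq, ← AddCircle.coe_zsmul, ← AddCircle.coe_zsmul,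
    ← AddCircle.coe_add, AddCircle.coe_eq_zero_iff]
  simp only [zsmul_eq_mul, mul_one, eq_comm]

lemma gammaSlope_neg (s1 s2 : ℤ) : GammaSlope (-s1) (-s2) = GammaSlope s1 s2 := by
  ext θ
  simp only [GammaSlope, mem_ofPred_eq, neg_smul, ← neg_add, neg_eq_zero]

lemma gammaSlope_inter_piSquare_eq_empty_iff_forall_ne_int (s1 s2 : ℤ) (r : ℕ) :
    GammaSlope s1 s2 ∩ PiSquare r = ∅ ↔
      ∀ x ∈ Ioo (0 : ℝ) (1 / r), ∀ y ∈ Ioo (0 : ℝ) (1 / r), ∀ n : ℤ, s1 * x + s2 * y ≠ n := by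
  simp only [eq_empty_iff_forall_notMem, PiSquare, mem_inter_iff, mem_ofPred_eq, mem_Ioo]
  constructor
  · rintro h x ⟨hx0, hx⟩ y ⟨hy0, hy⟩ n hn
    exact h _ ⟨mk_mem_gammaSlope_iff.2 ⟨n, hn⟩, x, y, hx0, hx, hy0, hy, rfl⟩
  · rintro h _ ⟨hΓ, x, y, hx0, hx, hy0, hy, rfl⟩
    obtain ⟨n, hn⟩ := mk_mem_gammaSlope_iff.1 hΓ
    exact h x ⟨hx0, hx⟩ y ⟨hy0, hy⟩ n hn

lemma exists_mem_Ioo_mul_add_mul_eq_zero {a b t : ℝ} (ha : 0 < a) (hb : b < 0) (ht : 0 < t) :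
    ∃ x ∈ Ioo 0 t, ∃ y ∈ Ioo 0 t, a * x + b * y = 0 := by
  have hab : 0 < a - b := by linarith
  refine ⟨-b * t / (a - b), ⟨div_pos (mul_pos (neg_pos.2 hb) ht) hab, ?_⟩,
    a * t / (a - b), ⟨by positivity, ?_⟩, ?_⟩
  · rw [div_lt_iff₀ hab]; nlinarith
  · rw [div_lt_iff₀ hab]; nlinarith
  · field_simp; ring

lemma forall_mem_Ioo_mul_add_mul_ne_int_iff {a b : ℤ} {r : ℕ} (ha : 0 < a) (hb : 0 < b)
    (hr : 0 < r) :
    (∀ x ∈ Ioo (0 : ℝ) (1 / r), ∀ y ∈ Ioo (0 : ℝ) (1 / r), ∀ n : ℤ, a * x + b * y ≠ n) ↔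
      a + b ≤ r := by
  have haR : (0 : ℝ) < a := by exact_mod_cast ha
  have hbR : (0 : ℝ) < b := by exact_mod_cast hb
  have hrR : (0 : ℝ) < r := by exact_mod_cast hr
  constructor
  · intro h
    by_contra! hlt
    have hltR : (r : ℝ) < a + b := by exact_mod_cast hlt
    have hmem : 1 / ((a : ℝ) + b) ∈ Ioo (0 : ℝ) (1 / r) :=
      ⟨by positivity, one_div_lt_one_div_of_lt hrR hltR⟩
    exact h _ hmem _ hmem 1 (by field_simp; push_cast; ring)
  · intro hle x ⟨hx0, hx⟩ y ⟨hy0, hy⟩ n hn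
    have hleR : (a : ℝ) + b ≤ r := by exact_mod_cast hle
    have hx' : x * r < 1 := (lt_div_iff₀ hrR).1 (by simpa using hx)
    have hy' : y * r < 1 := (lt_div_iff₀ hrR).1 (by simpa using hy)
    have hn0 : (0 : ℝ) < n := hn ▸ by positivity
    have hn1 : (n : ℝ) < 1 := hn ▸ by nlinarith
    have : (0 : ℤ) < n := by exact_mod_cast hn0
    have : n < (1 : ℤ) := by exact_mod_cast hn1
    omega

theorem gammaSlope_inter_piSquare_eq_empty_iff {s1 s2 : ℤ} {r : ℕ} (h1 : s1 ≠ 0) (h2 : s2 ≠ 0)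
    (hr : 0 < r) : GammaSlope s1 s2 ∩ PiSquare r = ∅ ↔ 0 < s1 * s2 ∧ |s1| + |s2| ≤ r := by
  wlog hs1 : 0 < s1 generalizing s1 s2
  · have := this (neg_ne_zero.2 h1) (neg_ne_zero.2 h2) (by omega)
    rwa [gammaSlope_neg, neg_mul_neg, abs_neg, abs_neg] at this
  rw [gammaSlope_inter_piSquare_eq_empty_iff_forall_ne_int]
  rcases h2.lt_or_gt with hs2 | hs2
  · obtain ⟨x, hx, y, hy, h0⟩ := exists_mem_Ioo_mul_add_mul_eq_zero (a := s1) (b := s2)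
      (by exact_mod_cast hs1) (by exact_mod_cast hs2) (by positivity : (0 : ℝ) < 1 / r)
    exact iff_of_false (fun h ↦ h x hx y hy 0 (by simpa using h0))
      (fun h ↦ by nlinarith [h.1])
  · rw [forall_mem_Ioo_mul_add_mul_ne_int_iff hs1 hs2 hr, abs_of_pos hs1, abs_of_pos hs2]
    simp only [mul_pos hs1 hs2, true_and]

theorem gammaSlope_inter_piSquare_three_eq_empty_iff
    (s1 s2 : ℤ) (h1 : s1 ≠ 0) (h2 : s2 ≠ 0) :
    GammaSlope s1 s2 ∩ PiSquare 3 = ∅ ↔ (0 < s1 * s2 ∧ |s1| + |s2| ≤ 3) :=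
  gammaSlope_inter_piSquare_eq_empty_iff h1 h2 three_pos
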